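/- Let D = {0,1,2} and let f be a k-ary idempotent operation on D which is a generalized Hubie polymorphism on the word z₁…z_k (i.e., for each i, fixing position i to zᵢ and letting the other positions range over all of D yields all of D as output). If z₁ = ⋯ = z_k = a for a single element a, then for every m, the adversaries Υ_{m,k-1,a} (rectangular adversaries with k−1 positions full and the rest equal to {a}) generate D^m in the clone generated by f. -/
import Mathlib


/-- Operations in the clone generated by a single `k`-ary operation `f`. -/
inductive InClone (A : Type) (k : ℕ) (f : (Fin k → A) → A) :
    (n : ℕ) → ((Fin n → A) → A) → Prop
  | proj (n : ℕ) (i : Fin n) : InClone A k f n (fun t => t i)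
  | comp (n : ℕ) (gs : Fin k → (Fin n → A) → A)
      (h : ∀ j : Fin k, InClone A k f n (gs j)) :
      InClone A k f n (fun t => f (fun j => gs j t))

theorem InClone.rename {A : Type} {k n : ℕ} {f : (Fin k → A) → A} {g : (Fin n → A) → A}
    (hg : InClone A k f n g) {n' : ℕ} (σ : Fin n → Fin n') :
    InClone A k f n' (fun t => g (fun i => t (σ i))) := by
  induction hg with
  | proj i => exact InClone.proj n' (σ i)
  | comp gs h ih => exact InClone.comp n' (fun j t => gs j (fun i => t (σ i))) ih

theorem InClone.idem {A : Type} {k n : ℕ} {f : (Fin k → A) → A}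
    (hid : ∀ b, f (fun _ => b) = b) {g : (Fin n → A) → A}
    (hg : InClone A k f n g) (b : A) : g (fun _ => b) = b := by
  induction hg with
  | proj i => rfl
  | comp gs h ih =>
    have : (fun j => gs j (fun _ => b)) = fun _ => b := funext ih
    show f (fun j => gs j (fun _ => b)) = b
    rw [this]; exact hid b

def Gen (k : ℕ) (f : (Fin k → Fin 3) → Fin 3) (a : Fin 3) (m : ℕ) (t : Fin m → Fin 3) : Prop :=
  ∃ (r : ℕ) (g : (Fin r → Fin 3) → Fin 3), InClone (Fin 3) k f r g ∧
    ∃ ts : Fin r → Fin m → Fin 3,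
      (∀ j : Fin r, (Finset.univ.filter (fun i : Fin m => ts j i ≠ a)).card ≤ k - 1) ∧
      (∀ i : Fin m, g (fun j => ts j i) = t i)

theorem gen_base {k : ℕ} {f : (Fin k → Fin 3) → Fin 3} {a : Fin 3} {m : ℕ} (t : Fin m → Fin 3)
    (h : (Finset.univ.filter (fun i : Fin m => t i ≠ a)).card ≤ k - 1) : Gen k f a m t :=
  ⟨1, fun v => v 0, InClone.proj 1 0, fun _ => t, fun _ => h, fun _ => rfl⟩

theorem gen_comp {k : ℕ} {f : (Fin k → Fin 3) → Fin 3} {a : Fin 3} {m : ℕ}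
    (u : Fin k → Fin m → Fin 3) (hu : ∀ j, Gen k f a m (u j)) :
    Gen k f a m (fun i => f (fun j => u j i)) := by
  classical
  choose r g hg ts hcard hcol using hu
  let e : (Σ j : Fin k, Fin (r j)) ≃ Fin (Fintype.card (Σ j : Fin k, Fin (r j))) :=
    Fintype.equivFin _
  refine ⟨_, fun v => f (fun j => g j (fun p => v (e ⟨j, p⟩))),
    InClone.comp _ (fun j v => g j (fun p => v (e ⟨j, p⟩)))
      (fun j => (hg j).rename (fun p => e ⟨j, p⟩)),
    fun q => ts (e.symm q).1 (e.symm q).2, fun q => hcard _ _, fun i => ?_⟩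
  show f (fun j => g j (fun p => ts (e.symm (e ⟨j, p⟩)).1 (e.symm (e ⟨j, p⟩)).2 i)) = f (fun j => u j i)
  congr 1; funext j
  have h2 : ∀ p : Fin (r j), ts (e.symm (e ⟨j, p⟩)).1 (e.symm (e ⟨j, p⟩)).2 i = ts j p i := by
    intro p; rw [Equiv.symm_apply_apply]
  rw [funext h2]; exact hcol j i

theorem card_nonA_snoc {m : ℕ} (y : Fin m → Fin 3) (c a : Fin 3) :
    (Finset.univ.filter (fun i : Fin (m+1) => (Fin.snoc y c : Fin (m+1) → Fin 3) i ≠ a)).card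
      = (Finset.univ.filter (fun i : Fin m => y i ≠ a)).card + (if c ≠ a then 1 else 0) := by
  classical
  simp only [Finset.card_filter, Fin.sum_univ_castSucc, Fin.snoc_castSucc, Fin.snoc_last]

theorem gen_snoc_a {k : ℕ} {f : (Fin k → Fin 3) → Fin 3} {a : Fin 3} {m : ℕ}
    (hid : ∀ b, f (fun _ => b) = b) (t : Fin m → Fin 3) (h : Gen k f a m t) :
    Gen k f a (m+1) (Fin.snoc t a) := by
  obtain ⟨r, g, hg, ts, hcard, hcol⟩ := h
  refine ⟨r, g, hg, fun j => Fin.snoc (ts j) a, fun j => ?_, fun i => ?_⟩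
  · rw [card_nonA_snoc]; simpa using hcard j
  · refine Fin.lastCases ?_ (fun i => ?_) i
    · simp only [Fin.snoc_last]
      exact hg.idem hid a
    · simp only [Fin.snoc_castSucc]
      exact hcol i

/-- On `D = {0,1,2}`: if `f` is a `k`-ary idempotent generalized Hubie polymorphism on
the constant word `a…a` (fixing any position to `a` and ranging the others over `D`
yields all of `D`), then for every `m` the adversaries `Υ_{m,k-1,a}` generate `D^m`
in the clone generated by `f`. -/
theorem generalized_hubie_constant_word_generates (k : ℕ)
    (f : (Fin k → Fin 3) → Fin 3) (a : Fin 3)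
    (hidem : ∀ b : Fin 3, f (fun _ => b) = b)
    (hHubie : ∀ (i : Fin k) (b : Fin 3), ∃ t : Fin k → Fin 3, t i = a ∧ f t = b) :
    ∀ m : ℕ, 1 ≤ m → ∀ t : Fin m → Fin 3,
      ∃ (r : ℕ) (g : (Fin r → Fin 3) → Fin 3), InClone (Fin 3) k f r g ∧
        ∃ ts : Fin r → Fin m → Fin 3,
          (∀ j : Fin r, (Finset.univ.filter (fun i : Fin m => ts j i ≠ a)).card ≤ k - 1) ∧
          (∀ i : Fin m, g (fun j => ts j i) = t i) := by

  classical
  have hk2 : 2 ≤ k := by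
    by_contra hlt
    push_neg at hlt
    interval_cases k
    · have h0 := hidem 0
      have h1 := hidem 1
      have he : (fun _ : Fin 0 => (0 : Fin 3)) = (fun _ => 1) := funext (fun i => i.elim0)
      rw [he] at h0
      exact absurd (h0.symm.trans h1) (by decide)
    · obtain ⟨t0, ht0a, ht0⟩ := hHubie 0 0
      obtain ⟨t1, ht1a, ht1⟩ := hHubie 0 1
      have he : t0 = t1 := funext fun i => by
        have hi : i = 0 := Subsingleton.elim _ _
        rw [hi, ht0a, ht1a]
      rw [he, ht1] at ht0
      exact absurd ht0 (by decide)
  choose s hsa hsf using hHubie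
  suffices H : ∀ m (t : Fin m → Fin 3), Gen k f a m t by
    intro m _ t; exact H m t
  intro m
  induction m with
  | zero =>
    intro t
    exact gen_base t (by simp)
  | succ m IH =>
    have inner : ∀ n (d : Fin m → Fin 3) (c : Fin 3),
        (Finset.univ.filter (fun i : Fin m => d i ≠ a)).card ≤ n →
        Gen k f a (m+1) (Fin.snoc d c) := by
      intro n
      induction n using Nat.strong_induction_on with
      | _ n IHn =>
      intro d c hcd
      by_cases hca : c = a
      · subst hca; exact gen_snoc_a hidem _ (IH d)
      by_cases hsmall : (Finset.univ.filter (fun i : Fin m => d i ≠ a)).card ≤ k - 2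
      · apply gen_base
        rw [card_nonA_snoc]
        simp only [hca, if_pos, ne_eq, not_false_eq_true, if_true]
        simp only [ne_eq] at hsmall hcd
        omega
      push_neg at hsmall
      have hbig : k - 1 ≤ (Finset.univ.filter (fun i : Fin m => d i ≠ a)).card := by omega
      obtain ⟨s', hs'sub, hs'card⟩ := Finset.exists_subset_card_eq hbig
      set ι : Fin (k-1) → Fin m := fun j' => s'.orderEmbOfFin hs'card j' with hι
      have hιmem : ∀ j' : Fin (k-1), d (ι j') ≠ a := fun j' => by
        have hm := hs'sub (Finset.orderEmbOfFin_mem s' hs'card j')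
        simpa using hm
      have hιinj : Function.Injective ι := (s'.orderEmbOfFin hs'card).injective
      set pos : Fin (k-1) → Fin k := fun j' => ⟨j'.val + 1, by omega⟩ with hpos
      set V : Fin m → Fin k → Fin 3 := fun i =>
        if h : ∃ j', ι j' = i then s (pos h.choose) (d i) else fun _ => d i with hV
      set z : Fin k → Fin 3 := s ⟨0, by omega⟩ c with hz
      set u : Fin k → Fin (m+1) → Fin 3 :=
        fun j => Fin.snoc (fun i => V i j) (z j) with hu
      have hfV : ∀ i, f (V i) = d i := by
        intro i
        by_cases h : ∃ j', ι j' = i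
        · rw [hV]; simp only [dif_pos h]; exact hsf _ _
        · rw [hV]; simp only [dif_neg h]; exact hidem _
      have hVι : ∀ j', V (ι j') (pos j') = a := by
        intro j'
        have hex : ∃ j'', ι j'' = ι j' := ⟨j', rfl⟩
        have hch : hex.choose = j' := hιinj hex.choose_spec
        rw [hV]; simp only [dif_pos hex, hch]
        exact hsa _ _
      have hgen : ∀ j, Gen k f a (m+1) (u j) := by
        intro j
        by_cases hj0 : j = ⟨0, by omega⟩
        · have hz0 : z j = a := by rw [hj0, hz]; exact hsa _ _
          rw [hu]
          simp only [hz0]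
          exact gen_snoc_a hidem _ (IH _)
        · have hj1 : 1 ≤ j.val := by
            rcases Nat.eq_zero_or_pos j.val with h | h
            · exact absurd (Fin.ext h) hj0
            · exact h
          set j' : Fin (k-1) := ⟨j.val - 1, by omega⟩ with hj'
          have hpj : pos j' = j := by rw [hpos]; exact Fin.ext (by simp [hj']; omega)
          have hsub : Finset.univ.filter (fun i : Fin m => V i j ≠ a)
              ⊆ (Finset.univ.filter (fun i : Fin m => d i ≠ a)).erase (ι j') := by
            intro i hi
            rw [Finset.mem_filter] at hi
            rw [Finset.mem_erase, Finset.mem_filter]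
            have hne : i ≠ ι j' := by
              rintro rfl
              rw [← hpj] at hi
              exact hi.2 (hVι j')
            refine ⟨hne, Finset.mem_univ i, ?_⟩
            by_cases h : ∃ j'', ι j'' = i
            · obtain ⟨j'', rfl⟩ := h
              exact hιmem j''
            · rw [hV] at hi
              simpa only [dif_neg h] using hi.2
          have hcount : (Finset.univ.filter (fun i : Fin m => V i j ≠ a)).card ≤ n - 1 := by
            have h1 := Finset.card_le_card hsub
            have h2 : ((Finset.univ.filter (fun i : Fin m => d i ≠ a)).erase (ι j')).card
                = (Finset.univ.filter (fun i : Fin m => d i ≠ a)).card - 1 :=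
              Finset.card_erase_of_mem (by simp [hιmem j'])
            simp only [ne_eq] at h1 h2 hcd ⊢
            omega
          have hn1 : n - 1 < n := by omega
          exact IHn (n-1) hn1 _ _ hcount
      have := gen_comp u hgen
      have heq : (fun i => f (fun j => u j i)) = Fin.snoc d c := by
        funext i
        refine Fin.lastCases ?_ (fun i => ?_) i
        · have h1 : (fun j => u j (Fin.last m)) = z := by
            funext j; rw [hu]; simp [Fin.snoc_last]
          rw [h1, Fin.snoc_last, hz]
          exact hsf _ _
        · have h1 : (fun j => u j (Fin.castSucc i)) = V i := by
            funext j; rw [hu]; simp [Fin.snoc_castSucc]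
          rw [h1, Fin.snoc_castSucc]
          exact hfV i
      rwa [heq] at this
    intro t
    have hize := inner ((Finset.univ.filter (fun i : Fin m => Fin.init t i ≠ a)).card)
      (Fin.init t) (t (Fin.last m)) le_rfl
    rwa [Fin.snoc_init_self] at hize
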